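/- arXiv:2212.12912 — 3 statements merged into one kernel-verified Lean document; each statement's English description precedes it below -/
import Mathlib

section
/- Fix a finite index set of satellites and, for each satellite n, nonnegative processing loads a^(n) : Fin K → ℝ (a^(n)_k represents x_k^(n)·C(ρ_k,ε)) with Σ_k a^(n)_k > 0. Let ν > 0 (effective capacitance), B > 0 (the processing budget K·N_CPU·T_GTF), and f_max > 0 (the maximum CPU frequency). Assume Σ_k a^(n)_k ≤ B·f_max for every satellite n. Then for every frequency assignment F with 0 < F(n,k) ≤ f_max for all n,k and Σ_k a^(n)_k / F(n,k) ≤ B for every n, the total processing energy satisfies Σ_n Σ_k ν·a^(n)_k·F(n,k)² ≥ Σ_n ν·(Σ_k a^(n)_k)³ / B². Moreover the constant assignment F*(n,k) = (Σ_k a^(n)_k)/B satisfies all the constraints and attains this lower bound; i.e., the frame-independent frequency f^(n) = (Σ_k x_k^(n)·C(ρ_k,ε))/(K·N_CPU·T_GTF) is a global minimizer of the processing-energy problem P_F. -/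
/-- Pointwise tangent-line bound: for `a ≥ 0`, `f, c > 0`,
`a * f^2 ≥ 3*a*c^2 - 2*c^3*(a/f)`. -/
lemma tangent_bound (a f c : ℝ) (ha : 0 ≤ a) (hf : 0 < f) (hc : 0 < c) :
    3 * a * c ^ 2 - 2 * c ^ 3 * (a / f) ≤ a * f ^ 2 := by
  rw [div_eq_mul_inv, sub_le_iff_le_add]
  have h : a * (f - c) ^ 2 * (f + 2 * c) ≥ 0 := by positivity
  have hfne : f ≠ 0 := ne_of_gt hf
  have key : 3 * a * c ^ 2 * f ≤ a * f ^ 2 * f + 2 * c ^ 3 * a := by nlinarith [h]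
  calc 3 * a * c ^ 2 = (3 * a * c ^ 2 * f) * f⁻¹ := by
        rw [mul_inv_cancel_right₀ hfne]
    _ ≤ (a * f ^ 2 * f + 2 * c ^ 3 * a) * f⁻¹ := by
        apply mul_le_mul_of_nonneg_right key (by positivity)
    _ = a * f ^ 2 + 2 * c ^ 3 * (a * f⁻¹) := by field_simp

/-- Theorem 1 (optimal CPU frequency): for each satellite `n` with nonnegative
processing loads `a n k` summing to a positive value, under the feasibility
condition `∑ k, a n k ≤ B * f_max`, any feasible frequency assignment `F`
consumes at least `∑ n, ν * (∑ k, a n k)^3 / B^2` processing energy, and the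
constant (frame-independent) assignment `F* n k = (∑ k, a n k) / B` is feasible
and attains this lower bound. -/
theorem optimal_cpu_frequency
    {S : Type*} [Fintype S] {K : ℕ}
    (a : S → Fin K → ℝ) (ν B fmax : ℝ)
    (ha : ∀ n k, 0 ≤ a n k)
    (hApos : ∀ n, 0 < ∑ k, a n k)
    (hν : 0 < ν) (hB : 0 < B) (hfmax : 0 < fmax)
    (hfeas : ∀ n, ∑ k, a n k ≤ B * fmax) :
    (∀ F : S → Fin K → ℝ,
      (∀ n k, 0 < F n k ∧ F n k ≤ fmax) →
      (∀ n, ∑ k, a n k / F n k ≤ B) →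
      ∑ n, ν * (∑ k, a n k) ^ 3 / B ^ 2 ≤ ∑ n, ∑ k, ν * a n k * (F n k) ^ 2) ∧
    ((∀ (n : S) (_k : Fin K), 0 < (∑ j, a n j) / B ∧ (∑ j, a n j) / B ≤ fmax) ∧
     (∀ n, ∑ k, a n k / ((∑ j, a n j) / B) ≤ B) ∧
     (∑ n, ∑ k : Fin K, ν * a n k * ((∑ j, a n j) / B) ^ 2
        = ∑ n, ν * (∑ k, a n k) ^ 3 / B ^ 2)) := by
  constructor
  · intro F hF hFB
    apply Finset.sum_le_sum
    intro n _
    set A := ∑ k, a n k with hA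
    have hApos' : 0 < A := hApos n
    set c : ℝ := A / B with hc
    have hcpos : 0 < c := by positivity
    have step1 : ∑ k, (3 * a n k * c ^ 2 - 2 * c ^ 3 * (a n k / F n k))
        ≤ ∑ k, a n k * F n k ^ 2 := by
      apply Finset.sum_le_sum
      intro k _
      exact tangent_bound (a n k) (F n k) c (ha n k) (hF n k).1 hcpos
    have step2 : ∑ k, (3 * a n k * c ^ 2 - 2 * c ^ 3 * (a n k / F n k))
        = 3 * A * c ^ 2 - 2 * c ^ 3 * ∑ k, a n k / F n k := by
      rw [Finset.sum_sub_distrib]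
      congr 1
      · rw [← Finset.sum_mul, ← Finset.mul_sum]
      · rw [← Finset.mul_sum]
    have step3 : A ^ 3 / B ^ 2 ≤ 3 * A * c ^ 2 - 2 * c ^ 3 * ∑ k, a n k / F n k := by
      have h1 : 2 * c ^ 3 * ∑ k, a n k / F n k ≤ 2 * c ^ 3 * B := by
        apply mul_le_mul_of_nonneg_left (hFB n) (by positivity)
      have h2 : 3 * A * c ^ 2 - 2 * c ^ 3 * B = A ^ 3 / B ^ 2 := by
        rw [hc]; field_simp; ring
      linarith
    have : A ^ 3 / B ^ 2 ≤ ∑ k, a n k * F n k ^ 2 := by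
      calc A ^ 3 / B ^ 2 ≤ _ := step3
        _ = ∑ k, (3 * a n k * c ^ 2 - 2 * c ^ 3 * (a n k / F n k)) := step2.symm
        _ ≤ _ := step1
    calc ν * A ^ 3 / B ^ 2 = ν * (A ^ 3 / B ^ 2) := by ring
      _ ≤ ν * ∑ k, a n k * F n k ^ 2 := by
          apply mul_le_mul_of_nonneg_left this hν.le
      _ = ∑ k, ν * a n k * F n k ^ 2 := by
          rw [Finset.mul_sum]; apply Finset.sum_congr rfl; intros; ring
  · refine ⟨fun n _ => ⟨div_pos (hApos n) hB, ?_⟩, fun n => ?_, ?_⟩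
    · rw [div_le_iff₀ hB, mul_comm]; exact hfeas n
    · have hApos' := hApos n
      have hrw : ∀ k : Fin K, a n k / ((∑ j, a n j) / B) = a n k * B / (∑ j, a n j) := by
        intro k; rw [div_div_eq_mul_div]
      rw [Finset.sum_congr rfl (fun k _ => hrw k), ← Finset.sum_div, ← Finset.sum_mul,
        mul_comm, mul_div_assoc, div_self hApos'.ne', mul_one]
    · apply Finset.sum_congr rfl
      intro n _
      have hApos' := hApos n
      rw [← Finset.sum_mul]
      have : (∑ x, ν * a n x) = ν * ∑ x, a n x := by
        rw [Finset.mul_sum]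
      rw [this]
      field_simp
end

section
/- Let a : Fin K → ℝ be nonnegative with Σ_k a_k > 0 and f : Fin K → ℝ be strictly positive. Then equality (Σ_k a_k)³ = (Σ_k a_k·f_k²)·(Σ_k a_k/f_k)² holds if and only if there exists a constant c > 0 such that f_k = c for every index k with a_k > 0. -/
/-- Lagrange-type identity for `(∑ a f)(∑ a/f) - (∑ a)²`. -/
lemma holder_aux_id1 {K : ℕ} (a f : Fin K → ℝ) (hf : ∀ k, 0 < f k) :
    ∑ i, ∑ j, a i * a j * (f i - f j)^2 / (f i * f j)
      = 2*((∑ k, a k * f k)*(∑ k, a k / f k) - (∑ k, a k)^2) := by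
  have hfne : ∀ k, f k ≠ 0 := fun k => (hf k).ne'
  have e1 : (∑ k, a k * f k) * (∑ k, a k / f k) = ∑ i, ∑ j, (a i * f i) * (a j / f j) :=
    Finset.sum_mul_sum _ _ _ _
  have e2 : (∑ k, a k)^2 = ∑ i, ∑ j, a i * a j := by
    rw [sq]; exact Finset.sum_mul_sum _ _ _ _
  have e3 : ∑ i, ∑ j, (a j * f j) * (a i / f i) = ∑ i, ∑ j, (a i * f i) * (a j / f j) := by
    rw [Finset.sum_comm]
  calc ∑ i, ∑ j, a i * a j * (f i - f j)^2 / (f i * f j)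
      = ∑ i, ∑ j, ((a i * f i) * (a j / f j) + (a j * f j) * (a i / f i) - 2*(a i * a j)) := by
        refine Finset.sum_congr rfl fun i _ => Finset.sum_congr rfl fun j _ => ?_
        have hi := hfne i; have hj := hfne j
        field_simp
        ring
    _ = (∑ i, ∑ j, (a i * f i) * (a j / f j)) + (∑ i, ∑ j, (a j * f j) * (a i / f i))
          - ∑ i, ∑ j, 2*(a i * a j) := by
        simp [Finset.sum_add_distrib, Finset.sum_sub_distrib]
    _ = 2*((∑ k, a k * f k)*(∑ k, a k / f k) - (∑ k, a k)^2) := by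
        rw [e3, ← e1, e2]
        simp [← Finset.mul_sum]
        ring

/-- Lagrange-type identity for `(∑ a f²)(∑ a) - (∑ a f)²`. -/
lemma holder_aux_id2 {K : ℕ} (a f : Fin K → ℝ) :
    ∑ i, ∑ j, a i * a j * (f i - f j)^2
      = 2*((∑ k, a k * (f k)^2)*(∑ k, a k) - (∑ k, a k * f k)^2) := by
  have e1 : (∑ k, a k * (f k)^2) * (∑ k, a k) = ∑ i, ∑ j, (a i * (f i)^2) * (a j) :=
    Finset.sum_mul_sum _ _ _ _
  have e2 : (∑ k, a k * f k)^2 = ∑ i, ∑ j, (a i * f i) * (a j * f j) := by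
    rw [sq]; exact Finset.sum_mul_sum _ _ _ _
  have e3 : ∑ i, ∑ j, (a j * (f j)^2) * (a i) = ∑ i, ∑ j, (a i * (f i)^2) * (a j) := by
    rw [Finset.sum_comm]
  calc ∑ i, ∑ j, a i * a j * (f i - f j)^2
      = ∑ i, ∑ j, ((a i * (f i)^2) * (a j) + (a j * (f j)^2) * (a i)
          - 2*((a i * f i) * (a j * f j))) := by
        refine Finset.sum_congr rfl fun i _ => Finset.sum_congr rfl fun j _ => ?_
        ring
    _ = (∑ i, ∑ j, (a i * (f i)^2) * (a j)) + (∑ i, ∑ j, (a j * (f j)^2) * (a i))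
          - ∑ i, ∑ j, 2*((a i * f i) * (a j * f j)) := by
        simp [Finset.sum_add_distrib, Finset.sum_sub_distrib]
    _ = 2*((∑ k, a k * (f k)^2)*(∑ k, a k) - (∑ k, a k * f k)^2) := by
        rw [e3, ← e1]
        simp only [← Finset.mul_sum, ← Finset.sum_mul]
        ring

/-- Equality condition of the Hölder-type inequality
`(∑ a)^3 ≤ (∑ a f²)·(∑ a/f)²`: equality holds iff `f` is constant on the
support of `a`. -/
theorem holder_type_equality_iff
    {K : ℕ} (a f : Fin K → ℝ)
    (ha : ∀ k, 0 ≤ a k) (hA : 0 < ∑ k, a k) (hf : ∀ k, 0 < f k) :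
    (∑ k, a k) ^ 3 = (∑ k, a k * (f k) ^ 2) * (∑ k, a k / f k) ^ 2 ↔
      ∃ c : ℝ, 0 < c ∧ ∀ k, 0 < a k → f k = c := by
  have hfne : ∀ k, f k ≠ 0 := fun k => (hf k).ne'
  obtain ⟨k0, hk0⟩ : ∃ k, 0 < a k := by
    by_contra h
    push_neg at h
    have : ∑ k, a k = 0 := Finset.sum_eq_zero fun k _ => le_antisymm (h k) (ha k)
    linarith
  constructor
  · intro heq
    have id1 := holder_aux_id1 a f hf
    have id2 := holder_aux_id2 a f
    have h2nonneg : 0 ≤ ∑ i, ∑ j, a i * a j * (f i - f j)^2 :=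
      Finset.sum_nonneg fun i _ => Finset.sum_nonneg fun j _ =>
        mul_nonneg (mul_nonneg (ha i) (ha j)) (sq_nonneg _)
    have h1nonneg : 0 ≤ ∑ i, ∑ j, a i * a j * (f i - f j)^2 / (f i * f j) :=
      Finset.sum_nonneg fun i _ => Finset.sum_nonneg fun j _ =>
        div_nonneg (mul_nonneg (mul_nonneg (ha i) (ha j)) (sq_nonneg _))
          (mul_pos (hf i) (hf j)).le
    have cs1 : (∑ k, a k * f k)^2 ≤ (∑ k, a k * (f k)^2) * (∑ k, a k) := by linarith
    have cs2 : (∑ k, a k)^2 ≤ (∑ k, a k * f k)*(∑ k, a k / f k) := by linarith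
    have hM1 : 0 < ∑ k, a k * f k := by
      have h1 : a k0 * f k0 ≤ ∑ k, a k * f k :=
        Finset.single_le_sum (fun k _ => mul_nonneg (ha k) (hf k).le) (Finset.mem_univ k0)
      have : 0 < a k0 * f k0 := mul_pos hk0 (hf k0)
      linarith
    have hC : 0 < ∑ k, a k / f k := by
      have h1 : a k0 / f k0 ≤ ∑ k, a k / f k :=
        Finset.single_le_sum (fun k _ => div_nonneg (ha k) (hf k).le) (Finset.mem_univ k0)
      have : 0 < a k0 / f k0 := div_pos hk0 (hf k0)
      linarith
    -- key : equality in the second Cauchy-Schwarz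
    have key : (∑ k, a k * f k)*(∑ k, a k / f k) = (∑ k, a k)^2 := by
      nlinarith [mul_le_mul_of_nonneg_right cs1 (sq_nonneg (∑ k, a k / f k)),
        mul_pos hM1 hC, sq_nonneg ((∑ k, a k * f k)*(∑ k, a k / f k) - (∑ k, a k)^2)]
    have hzero : ∑ i, ∑ j, a i * a j * (f i - f j)^2 / (f i * f j) = 0 := by
      rw [id1, key]; ring
    have hterm : ∀ i j : Fin K, a i * a j * (f i - f j)^2 / (f i * f j) = 0 := by
      intro i j
      have houter := (Finset.sum_eq_zero_iff_of_nonneg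
        (fun i _ => Finset.sum_nonneg fun j _ =>
          div_nonneg (mul_nonneg (mul_nonneg (ha i) (ha j)) (sq_nonneg _))
            (mul_pos (hf i) (hf j)).le)).mp hzero i (Finset.mem_univ i)
      exact (Finset.sum_eq_zero_iff_of_nonneg (fun j _ =>
          div_nonneg (mul_nonneg (mul_nonneg (ha i) (ha j)) (sq_nonneg _))
            (mul_pos (hf i) (hf j)).le)).mp houter j (Finset.mem_univ j)
    refine ⟨f k0, hf k0, fun k hk => ?_⟩
    have h := hterm k k0
    have hd : f k * f k0 ≠ 0 := (mul_pos (hf k) (hf k0)).ne'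
    rcases div_eq_zero_iff.mp h with h' | h'
    · rcases mul_eq_zero.mp h' with h'' | h''
      · exact absurd h'' (mul_pos hk hk0).ne'
      · have : f k - f k0 = 0 := by
          exact pow_eq_zero_iff (by norm_num) |>.mp h''
        linarith
    · exact absurd h' hd
  · rintro ⟨c, hc, hconst⟩
    have hB : ∑ k, a k * (f k)^2 = c^2 * ∑ k, a k := by
      rw [Finset.mul_sum]
      refine Finset.sum_congr rfl fun k _ => ?_
      rcases eq_or_lt_of_le (ha k) with h | h
      · rw [← h]; ring
      · rw [hconst k h]; ring
    have hC : ∑ k, a k / f k = (∑ k, a k) / c := by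
      rw [Finset.sum_div]
      refine Finset.sum_congr rfl fun k _ => ?_
      rcases eq_or_lt_of_le (ha k) with h | h
      · rw [← h]; simp
      · rw [hconst k h]
    rw [hB, hC]
    field_simp
end

section
/- Let a : Fin K → ℝ be nonnegative with A := Σ_k a_k > 0, let ν > 0, B > 0 and f_max > 0, and assume A ≤ B·f_max. Then ν·A³/B² is the least element of the set of achievable energies {Σ_k ν·a_k·f_k² | f : Fin K → ℝ, (∀k, 0 < f_k ≤ f_max), Σ_k a_k/f_k ≤ B}; i.e., it is a lower bound on this set and it is attained (by the constant assignment f_k = A/B). -/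
private lemma tangent_ineq (f f0 : ℝ) (hf : 0 < f) (hf0 : 0 < f0) :
    3 * f0 ^ 2 - 2 * f0 ^ 3 / f ≤ f ^ 2 := by
  rw [sub_le_iff_le_add, ← sub_le_iff_le_add', le_div_iff₀ hf]
  nlinarith [sq_nonneg (f - f0), hf.le, hf0.le, mul_nonneg (sq_nonneg (f - f0)) (by linarith : (0:ℝ) ≤ f + 2 * f0)]

/-- Optimal-value formula of Theorem 1: `ν·A³/B²` is the least achievable
processing energy over all feasible per-frame CPU frequencies, where
`A = ∑ k, a k`. -/
theorem optimal_energy_is_least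
    {K : ℕ} (a : Fin K → ℝ) (A ν B fmax : ℝ)
    (ha : ∀ k, 0 ≤ a k) (hAdef : A = ∑ k, a k) (hA : 0 < A)
    (hν : 0 < ν) (hB : 0 < B) (hfmax : 0 < fmax)
    (hfeas : A ≤ B * fmax) :
    IsLeast
      {e : ℝ | ∃ f : Fin K → ℝ,
        (∀ k, 0 < f k ∧ f k ≤ fmax) ∧
        (∑ k, a k / f k ≤ B) ∧
        e = ∑ k, ν * a k * (f k) ^ 2}
      (ν * A ^ 3 / B ^ 2) := by
  have hAB : 0 < A / B := div_pos hA hB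
  constructor
  · -- membership: constant f = A/B
    refine ⟨fun _ => A / B, fun k => ⟨hAB, ?_⟩, ?_, ?_⟩
    · rw [div_le_iff₀ hB]; linarith [hfeas]
    · have h : ∑ k, a k / (A / B) = A / (A / B) := by
        rw [← Finset.sum_div, ← hAdef]
      rw [h]
      field_simp
      exact le_rfl
    · have h : ∑ k, ν * a k * (A / B) ^ 2 = ν * A * (A / B) ^ 2 := by
        rw [← Finset.sum_mul, ← Finset.mul_sum, ← hAdef]
      rw [h]
      field_simp
  · -- lower bound
    rintro e ⟨f, hf, hcon, rfl⟩
    set f0 := A / B with hf0def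
    have key : ∀ k, ν * a k * (3 * f0 ^ 2) - ν * (2 * f0 ^ 3) * (a k / f k)
        ≤ ν * a k * f k ^ 2 := by
      intro k
      have h := tangent_ineq (f k) f0 (hf k).1 hAB
      have h2 : a k * (3 * f0 ^ 2 - 2 * f0 ^ 3 / f k) ≤ a k * f k ^ 2 :=
        mul_le_mul_of_nonneg_left h (ha k)
      have h3 := mul_le_mul_of_nonneg_left h2 hν.le
      calc ν * a k * (3 * f0 ^ 2) - ν * (2 * f0 ^ 3) * (a k / f k)
          = ν * (a k * (3 * f0 ^ 2 - 2 * f0 ^ 3 / f k)) := by ring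
        _ ≤ ν * (a k * f k ^ 2) := h3
        _ = ν * a k * f k ^ 2 := by ring
    have hsum : ∑ k, (ν * a k * (3 * f0 ^ 2) - ν * (2 * f0 ^ 3) * (a k / f k))
        ≤ ∑ k, ν * a k * f k ^ 2 := Finset.sum_le_sum fun k _ => key k
    rw [Finset.sum_sub_distrib, ← Finset.sum_mul, ← Finset.mul_sum, ← Finset.mul_sum,
      ← hAdef] at hsum
    have hcon' : ν * (2 * f0 ^ 3) * (∑ k, a k / f k) ≤ ν * (2 * f0 ^ 3) * B := by
      apply mul_le_mul_of_nonneg_left hcon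
      positivity
    have hmain : ν * A * (3 * f0 ^ 2) - ν * (2 * f0 ^ 3) * B ≤ ∑ k, ν * a k * f k ^ 2 := by
      linarith
    have heq : ν * A * (3 * f0 ^ 2) - ν * (2 * f0 ^ 3) * B = ν * A ^ 3 / B ^ 2 := by
      rw [hf0def]; field_simp; ring
    linarith [heq ▸ hmain]
end
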